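/- Let A be a p-torsion-free commutative ring equipped with a ring endomorphism φ with φ(x) ≡ x^p mod p, giving A the structure of a δ-ring with δ(x) = (φ(x) − x^p)/p. If A is moreover a perfect δ-ring in the sense that φ is an automorphism, and (A, I) is a transversal perfect prism with A/I =: S, then for each r ≥ 1 the ring A/I_r is p-torsion-free and the reduction maps A/I_{r+1} → A/I_r are surjective with kernel I_r/I_{r+1} on which multiplication by p is injective. -/

import Mathlib

/-!
With `I = (d)` for a nonzerodivisor `d`, the ideal `I_r` is principal, generated by
`d · φ(d) ⋯ φ^(r-1)(d)`. The automorphism `φ^i` fixes `p` and carries `I` onto `(φ^i(d))`, so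
every `A/(φ^i(d))` is `p`-torsion-free like `A/I`. If `b` is a nonzerodivisor and both `A/(b)`
and `A/(c)` are `p`-torsion-free, then so is `A/(bc)`: from `p·x = y·b·c` one gets `x = b·x'`,
cancels `b`, and applies torsion-freeness of `A/(c)` to `p·x' = y·c`. Induction on `r` gives
the torsion-freeness of every `A/I_r`; injectivity of `p` on `I_r/I_{r+1}` is that of `A/I_{r+1}`,
and the statements about the reduction map are formal.
-/

/-- The `n`-fold composite of a ring endomorphism. -/
def iterHom {A : Type*} [CommRing A] (φ : A →+* A) : ℕ → (A →+* A)
  | 0 => RingHom.id A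
  | n + 1 => φ.comp (iterHom φ n)

/-- `prIdeal φ I r = I · φ(I) ⋯ φ^(r-1)(I)` (the ideal `I_r`), with `prIdeal φ I 0 = (1)`. -/
def prIdeal {A : Type*} [CommRing A] (φ : A →+* A) (I : Ideal A) : ℕ → Ideal A
  | 0 => ⊤
  | n + 1 => prIdeal φ I n * I.map (iterHom φ n)

open Ideal Function

section

variable {A : Type*} [CommRing A]

lemma iterHom_bijective {φ : A →+* A} (hφ : Bijective φ) : ∀ n, Bijective (iterHom φ n)
  | 0 => bijective_id
  | n + 1 => hφ.comp (iterHom_bijective hφ n)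

lemma prIdeal_span_singleton (φ : A →+* A) (d : A) (n : ℕ) :
    prIdeal φ (span {d}) n = span {∏ i ∈ Finset.range n, iterHom φ i d} := by
  induction n with
  | zero => simp [prIdeal]
  | succ n ih =>
    rw [prIdeal, ih, map_span, Set.image_singleton, span_singleton_mul_span_singleton,
      Finset.prod_range_succ]

lemma isSMulRegular_quotient_natCast_iff (J : Ideal A) (n : ℕ) :
    IsSMulRegular (A ⧸ J) (n : A) ↔ ∀ y : A ⧸ J, (n : A ⧸ J) * y = 0 → y = 0 := by
  simp [isSMulRegular_iff_right_eq_zero_of_smul, Nat.cast_smul_eq_nsmul, nsmul_eq_mul]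

lemma IsSMulRegular.quotient_map_ringEquiv {B : Type*} [CommRing B] (e : A ≃+* B)
    {J : Ideal A} {a : A} (h : IsSMulRegular (A ⧸ J) a) :
    IsSMulRegular (B ⧸ J.map e) (e a) := by
  rw [isSMulRegular_quotient_iff_mem_of_smul_mem] at h ⊢
  intro y hy
  obtain ⟨x, rfl⟩ := e.surjective y
  rw [smul_eq_mul, ← map_mul, apply_mem_of_equiv_iff] at hy
  exact apply_mem_of_equiv_iff.mpr (h x hy)

lemma IsSMulRegular.quotient_span_mul {a b c : A} (hb : b ∈ nonZeroDivisors A)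
    (hab : IsSMulRegular (A ⧸ span {b}) a) (hac : IsSMulRegular (A ⧸ span {c}) a) :
    IsSMulRegular (A ⧸ span {b * c}) a := by
  rw [isSMulRegular_quotient_iff_mem_of_smul_mem] at hab hac ⊢
  intro x hx
  obtain ⟨y, hy⟩ := mem_span_singleton'.mp hx
  obtain ⟨x', rfl⟩ := mem_span_singleton'.mp <|
    hab x (span_singleton_le_span_singleton.mpr (dvd_mul_right b c) hx)
  rw [smul_eq_mul] at hy
  have hax' : a * x' = y * c :=
    (mul_cancel_right_mem_nonZeroDivisors hb).mp (by linear_combination -hy)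
  obtain ⟨z, rfl⟩ := mem_span_singleton'.mp (hac x' (mem_span_singleton'.mpr ⟨y, hax'.symm⟩))
  exact mem_span_singleton'.mpr ⟨z, by ring⟩

lemma iterHom_mem_nonZeroDivisors {φ : A →+* A} (hφ : Bijective φ) {d : A}
    (hd : d ∈ nonZeroDivisors A) (i : ℕ) : iterHom φ i d ∈ nonZeroDivisors A := by
  rw [← MulEquivClass.map_nonZeroDivisors (RingEquiv.ofBijective _ (iterHom_bijective hφ i))]
  exact Submonoid.mem_map_of_mem _ hd

lemma IsSMulRegular.quotient_prIdeal {φ : A →+* A} (hφ : Bijective φ) {d : A}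
    (hd : d ∈ nonZeroDivisors A) {n : ℕ} (h : IsSMulRegular (A ⧸ span {d}) (n : A)) (r : ℕ) :
    IsSMulRegular (A ⧸ prIdeal φ (span {d}) r) (n : A) := by
  rw [prIdeal_span_singleton]
  induction r with
  | zero =>
    rw [Finset.prod_range_zero, span_singleton_one]
    exact fun _ _ _ => Subsingleton.elim _ _
  | succ r ih =>
    have hφr := h.quotient_map_ringEquiv (RingEquiv.ofBijective _ (iterHom_bijective hφ r))
    rw [map_span, Set.image_singleton, map_natCast] at hφr
    rw [Finset.prod_range_succ]
    exact ih.quotient_span_mul (prod_mem fun i _ => iterHom_mem_nonZeroDivisors hφ hd i) hφr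

end

theorem statement17_general
    (p : ℕ) {A : Type*} [CommRing A]
    (φ : A →+* A) (I : Ideal A) (d : A)
    (hdgen : I = Ideal.span {d}) (hdnz : d ∈ nonZeroDivisors A)
    (htrans : ∀ x : A ⧸ I, (p : A ⧸ I) * x = 0 → x = 0)
    (hperf : Function.Bijective φ)
    (r : ℕ) :
    (∀ y : A ⧸ prIdeal φ I r, (p : A ⧸ prIdeal φ I r) * y = 0 → y = 0) ∧
    Function.Surjective
      (Ideal.Quotient.factor (S := prIdeal φ I (r + 1)) (T := prIdeal φ I r) Ideal.mul_le_left) ∧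
    RingHom.ker
        (Ideal.Quotient.factor (S := prIdeal φ I (r + 1)) (T := prIdeal φ I r) Ideal.mul_le_left) =
      (prIdeal φ I r).map (Ideal.Quotient.mk (prIdeal φ I (r + 1))) ∧
    (∀ x ∈ prIdeal φ I r, (p : A) * x ∈ prIdeal φ I (r + 1) → x ∈ prIdeal φ I (r + 1)) := by
  subst hdgen
  have hI := (isSMulRegular_quotient_natCast_iff _ p).mpr htrans
  have hI_r := hI.quotient_prIdeal hperf hdnz
  refine ⟨(isSMulRegular_quotient_natCast_iff _ p).mp (hI_r r), Quotient.factor_surjective _,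
    Quotient.factor_ker _, fun _ _ hpx => mem_of_isSMulRegular_quotient_of_smul_mem (hI_r _) hpx⟩

/-- For a transversal perfect prism `(A, I)` (with `A` `p`-torsion-free and `φ` bijective)
and `r ≥ 1`: `A/I_r` is `p`-torsion-free, the reduction map `A/I_{r+1} → A/I_r` is
surjective with kernel `I_r/I_{r+1}` (the image of `I_r`), on which multiplication by `p`
is injective. -/
theorem statement17
    (p : ℕ) (hp : p.Prime) {A : Type*} [CommRing A]
    (δ : A → A) (φ : A →+* A) (I : Ideal A) (d : A)
    (hdgen : I = Ideal.span {d}) (hdnz : d ∈ nonZeroDivisors A)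
    (hφ : ∀ x : A, φ x = x ^ p + (p : A) * δ x)
    (hδ1 : δ 1 = 0)
    (hδadd : ∀ x y : A, δ (x + y) =
      δ x + δ y - ∑ i ∈ Finset.Ioo 0 p, ((p.choose i / p : ℕ) : A) * x ^ i * y ^ (p - i))
    (hδmul : ∀ x y : A, δ (x * y) =
      x ^ p * δ y + y ^ p * δ x + (p : A) * δ x * δ y)
    (hcomplete : IsAdicComplete (Ideal.span {(p : A)} ⊔ I) A)
    (hdist : (p : A) ∈ I ⊔ I.map φ)
    (htrans : ∀ x : A ⧸ I, (p : A ⧸ I) * x = 0 → x = 0)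
    (hAtf : ∀ x : A, (p : A) * x = 0 → x = 0)
    (hperf : Function.Bijective φ)
    (r : ℕ) (hr : 1 ≤ r) :
    (∀ y : A ⧸ prIdeal φ I r, (p : A ⧸ prIdeal φ I r) * y = 0 → y = 0) ∧
    Function.Surjective
      (Ideal.Quotient.factor (S := prIdeal φ I (r + 1)) (T := prIdeal φ I r) Ideal.mul_le_left) ∧
    RingHom.ker
        (Ideal.Quotient.factor (S := prIdeal φ I (r + 1)) (T := prIdeal φ I r) Ideal.mul_le_left) =
      (prIdeal φ I r).map (Ideal.Quotient.mk (prIdeal φ I (r + 1))) ∧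
    (∀ x ∈ prIdeal φ I r, (p : A) * x ∈ prIdeal φ I (r + 1) → x ∈ prIdeal φ I (r + 1)) :=
  statement17_general p φ I d hdgen hdnz htrans hperf r
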